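/- Adding the dominance cut makes the example infeasible. Consider V' = max_{x1∈{0,1}} min_{x2∈{0,1}} M'(x1,x2), where M'(x1,x2) = max { −x1 − x2 − x3 : x3 ∈ {0,1}, −3x1 + 2x2 − 2x3 ≤ 0, x1 − 2x2 + x3 ≤ 0, x3 ≤ x1 } (with max over the empty set equal to −∞). Then V' = −∞; that is, adding the constraint x3 ≤ x1 (which standard MIP dominance exploitation would suggest) to the QIP of the dominance counterexample makes the instance infeasible, although the original instance has value −2. -/

import Mathlib

/-- The inner value `M'(x1, x2)` of the dominance counterexample after adding
the dominance cut `x3 ≤ x1`: the maximum (in `EReal`, with `max ∅ = ⊥ = -∞`)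
of the objective `-x1 - x2 - x3` over all binary `x3` satisfying the two
original constraints and `x3 ≤ x1`. -/
noncomputable def M11 (x1 x2 : ℝ) : EReal :=
  sSup {z : EReal | ∃ x3 : ℝ, (x3 = 0 ∨ x3 = 1) ∧
    -3 * x1 + 2 * x2 - 2 * x3 ≤ 0 ∧
    x1 - 2 * x2 + x3 ≤ 0 ∧
    x3 ≤ x1 ∧
    z = ((-x1 - x2 - x3 : ℝ) : EReal)}

lemma M01_bot : M11 0 1 = ⊥ := by
  unfold M11
  rw [← sSup_empty (α := EReal)]
  congr 1
  ext z
  simp only [Set.mem_setOf_eq, Set.mem_empty_iff_false, iff_false]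
  rintro ⟨x3, h3, hc1, hc2, hc3, _⟩
  rcases h3 with rfl | rfl <;> linarith

lemma M10_bot : M11 1 0 = ⊥ := by
  unfold M11
  rw [← sSup_empty (α := EReal)]
  congr 1
  ext z
  simp only [Set.mem_setOf_eq, Set.mem_empty_iff_false, iff_false]
  rintro ⟨x3, h3, hc1, hc2, hc3, _⟩
  rcases h3 with rfl | rfl <;> norm_num at hc2

/-- **Adding the dominance cut makes the example infeasible.**  The value
`V' = max_{x1 ∈ {0,1}} min_{x2 ∈ {0,1}} M'(x1, x2)` of the QIP obtained by
adding the constraint `x3 ≤ x1` to the dominance counterexample equals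
`⊥ = -∞`, i.e. the instance becomes infeasible. -/
theorem dominance_cut_infeasible :
    max (min (M11 0 0) (M11 0 1)) (min (M11 1 0) (M11 1 1)) = ⊥ := by
  rw [M01_bot, M10_bot, min_bot_right, min_bot_left, max_self]
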